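/- For every integer k ≥ 5, h_{k,k+4} = (32/3)k^4 - (200/3)k^3 + (1403/6)k^2 - (2717/6)k + 384 (equivalently, 6·h_{k,k+4} = 64k^4 - 400k^3 + 1403k^2 - 2717k + 2304). -/

import Mathlib

/-- Integer binomial coefficient with the convention
`C(a,b) = a!/(b!(a-b)!)` if `0 ≤ b ≤ a` and `C(a,b) = 0` otherwise. -/
def ichoose (a b : ℤ) : ℤ := if 0 ≤ b ∧ b ≤ a then (a.toNat.choose b.toNat : ℤ) else 0

/-- The Delannoy numbers `D(n,m) = ∑_{k=0}^m C(m,k) C(n+m-k, m)`. -/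
def delannoy (n m : ℕ) : ℕ :=
  ∑ k ∈ Finset.range (m + 1), Nat.choose m k * Nat.choose (n + m - k) m

/-- `h k n = ∑_{i=0}^{k-1} D(k-1-i, i) C(n-i+k-2, 2k-2)` is the number of
column-convex polyominoes with `k` columns and area `n`. -/
def ccPoly (k n : ℕ) : ℤ :=
  ∑ i ∈ Finset.range k,
    (delannoy (k - 1 - i) i : ℤ) * ichoose ((n : ℤ) - i + k - 2) (2 * (k : ℤ) - 2)

/-- `r k m = ∑_{i=k}^{m-k} h_{k,i} h_{k,m-i}` is the number of plateau polycubes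
of width `k` and lateral area `m`. -/
def plateau (k m : ℕ) : ℤ :=
  ∑ i ∈ Finset.Icc k (m - k), ccPoly k i * ccPoly k (m - i)

/-!
For area `k + j` with `j < k`, the binomial `C(k + j - i + k - 2, 2k - 2) = C(2k - 2 + (j - i), j - i)`
vanishes for `i > j`, so `h_{k,k+j}` has only `j + 1` terms. For fixed `i`, `D(k - 1 - i, i)` is a
polynomial of degree `i` in `k` and the binomial one of degree `j - i`; for `j = 4` expanding the
five terms gives the quartic.
-/

open Finset Polynomial

theorem ichoose_eq_zero_of_lt {a b : ℤ} (h : a < b) : ichoose a b = 0 :=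
  if_neg fun hb => hb.2.not_gt h

theorem ichoose_natCast (a b : ℕ) : ichoose a b = a.choose b := by
  rcases le_or_gt b a with hba | hab
  · simp [ichoose, hba]
  · simp [ichoose_eq_zero_of_lt (Nat.cast_lt.2 hab), Nat.choose_eq_zero_of_lt hab]

theorem ccPoly_self_add_of_lt {k j : ℕ} (hjk : j < k) :
    ccPoly k (k + j) =
      ∑ i ∈ range (j + 1), (delannoy (k - 1 - i) i : ℤ) * (2 * k - 2 + (j - i)).choose (j - i) := by
  rw [ccPoly, ← sum_subset (range_subset_range.2 hjk)]
  · refine sum_congr rfl fun i hi => ?_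
    have hij : i ≤ j := Nat.lt_succ_iff.1 (mem_range.1 hi)
    have harg : ((k + j : ℕ) : ℤ) - i + k - 2 = ((2 * k - 2 + (j - i) : ℕ) : ℤ) := by omega
    have hsize : 2 * (k : ℤ) - 2 = ((2 * k - 2 : ℕ) : ℤ) := by omega
    rw [harg, hsize, ichoose_natCast, Nat.choose_symm_add]
  · intro i _ hi
    rw [ichoose_eq_zero_of_lt (by simp at hi; omega), mul_zero]

theorem delannoy_zero_right (n : ℕ) : delannoy n 0 = 1 := by
  simp [delannoy]

theorem delannoy_one_right (n : ℕ) : (delannoy n 1 : ℚ) = 2 * n + 1 := by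
  simp only [delannoy, Nat.choose_one_right, sum_range_succ, range_one, sum_singleton,
    Nat.choose_succ_self_right, zero_add, tsub_zero, one_mul, Nat.choose_self,
    add_tsub_cancel_right, Nat.cast_add, Nat.cast_one]
  ring

theorem delannoy_two_right (n : ℕ) : (delannoy n 2 : ℚ) = 2 * n ^ 2 + 2 * n + 1 := by
  simp only [delannoy, sum_range_succ, range_one, sum_singleton, Nat.reduceSubDiff, tsub_zero,
    add_tsub_cancel_right, Nat.cast_add, Nat.cast_mul, Nat.cast_choose_eq_descPochhammer_div,
    descPochhammer_succ_eval, descPochhammer_zero, eval_one, Nat.factorial, Nat.cast_ofNat,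
    Nat.cast_one]
  ring

theorem delannoy_three_right (n : ℕ) :
    (delannoy n 3 : ℚ) = (4 * n ^ 3 + 6 * n ^ 2 + 8 * n + 3) / 3 := by
  simp only [delannoy, sum_range_succ, range_one, sum_singleton, Nat.reduceSubDiff, tsub_zero,
    add_tsub_cancel_right, Nat.cast_add, Nat.cast_mul, Nat.cast_choose_eq_descPochhammer_div,
    descPochhammer_succ_eval, descPochhammer_zero, eval_one, Nat.factorial, Nat.cast_ofNat,
    Nat.cast_one]
  ring

theorem delannoy_four_right (n : ℕ) :
    (delannoy n 4 : ℚ) = (2 * n ^ 4 + 4 * n ^ 3 + 10 * n ^ 2 + 8 * n + 3) / 3 := by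
  simp only [delannoy, sum_range_succ, range_one, sum_singleton, Nat.reduceSubDiff, tsub_zero,
    add_tsub_cancel_right, Nat.cast_add, Nat.cast_mul, Nat.cast_choose_eq_descPochhammer_div,
    descPochhammer_succ_eval, descPochhammer_zero, eval_one, Nat.factorial, Nat.cast_ofNat,
    Nat.cast_one]
  ring

theorem ccPoly_area_width_add_four (k : ℕ) (hk : 5 ≤ k) :
    (ccPoly k (k + 4) : ℚ)
      = 32 / 3 * (k : ℚ) ^ 4 - 200 / 3 * (k : ℚ) ^ 3 + 1403 / 6 * (k : ℚ) ^ 2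
          - 2717 / 6 * (k : ℚ) + 384 := by
  obtain ⟨t, rfl⟩ : ∃ t, k = t + 5 := ⟨k - 5, by omega⟩
  rw [ccPoly_self_add_of_lt (by omega), show 2 * (t + 5) - 2 = 2 * t + 8 by omega]
  simp only [sum_range_succ, range_zero, sum_empty, zero_add, Nat.reduceAdd, Nat.add_one_sub_one,
    Nat.reduceSubDiff, tsub_zero]
  push_cast [delannoy_zero_right, delannoy_one_right, delannoy_two_right, delannoy_three_right,
    delannoy_four_right, Nat.cast_choose_eq_descPochhammer_div, descPochhammer_succ_eval,
    descPochhammer_zero, eval_one, Nat.factorial]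
  ring
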